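/- On a W̄₆-manifold (M,P,g) of dimension 2n, the curvature tensor satisfies R(x,y,Pz,Pw) - R(x,y,z,w) = (1/2n){(ψ₁-ψ₂)(A')(x,y,z,w) - (θ(Ω)/2n)(π₁-π₂)(x,y,z,w)}, where A'(y,z) = (∇_y θ)z + (1/2n)θ(y)θ(z). -/
import Mathlib


open scoped BigOperators

/-- An abstract (local) model of a Riemannian almost product manifold of
dimension `n`: `V` plays the role of the module of smooth vector fields over
the commutative ℝ-algebra `C` of smooth functions, `g` is the Riemannian
metric, `P` the almost product structure, `D` the directional derivative of
functions, `bracket` the Lie bracket of vector fields, `nabla` the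
Levi-Civita connection of `g`, and `e`, `e'` a frame together with its
`g`-reciprocal frame (used to form traces `g^{ij}·`). -/
structure RAPM (n : ℕ) where
  V : Type
  C : Type
  [instAG : AddCommGroup V]
  [instCR : CommRing C]
  [instAlg : Algebra ℝ C]
  [instMod : Module C V]
  g : V →ₗ[C] V →ₗ[C] C
  P : V →ₗ[C] V
  gSymm : ∀ x y, g x y = g y x
  Pinvol : ∀ x, P (P x) = x
  Piso : ∀ x y, g (P x) (P y) = g x y
  D : V → C → C
  Dadd : ∀ x f h, D x (f + h) = D x f + D x h
  bracket : V → V → V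
  bracketD : ∀ x y f, D (bracket x y) f = D x (D y f) - D y (D x f)
  jacobi : ∀ x y z,
    bracket x (bracket y z) + bracket y (bracket z x) + bracket z (bracket x y) = 0
  nabla : V → V → V
  nabla_add₁ : ∀ x y z, nabla (x + y) z = nabla x z + nabla y z
  nabla_smul₁ : ∀ (f : C) x y, nabla (f • x) y = f • nabla x y
  nabla_add₂ : ∀ x y z, nabla x (y + z) = nabla x y + nabla x z
  nabla_leibniz : ∀ x (f : C) y, nabla x (f • y) = D x f • y + f • nabla x y
  nabla_metric : ∀ x y z, D x (g y z) = g (nabla x y) z + g y (nabla x z)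
  torsion_free : ∀ x y, nabla x y - nabla y x = bracket x y
  e : Fin n → V
  e' : Fin n → V
  dual_frame : ∀ i j, g (e' i) (e j) = if i = j then 1 else 0
  frame_span : ∀ v : V, v = ∑ i, g (e' i) v • e i

namespace RAPM

attribute [instance] RAPM.instAG RAPM.instCR RAPM.instAlg RAPM.instMod

variable {n : ℕ} (Q : RAPM n)

/-- The fundamental tensor `F(x,y,z) = g((∇ₓP)y, z)`. -/
def F (x y z : Q.V) : Q.C := Q.g (Q.nabla x (Q.P y) - Q.P (Q.nabla x y)) z

/-- The curvature operator `R(x,y)z`. -/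
def R (x y z : Q.V) : Q.V :=
  Q.nabla x (Q.nabla y z) - Q.nabla y (Q.nabla x z) - Q.nabla (Q.bracket x y) z

/-- The (0,4) curvature tensor `R(x,y,z,w) = g(R(x,y)z, w)`. -/
def Rm (x y z w : Q.V) : Q.C := Q.g (Q.R x y z) w

/-- `tr P = g^{ij} g(e_i, P e_j)`. -/
def trP : Q.C := ∑ i, Q.g (Q.e' i) (Q.P (Q.e i))

/-- The Lee form `θ(x) = g^{ij} F(e_i, e_j, x)`. -/
def theta (x : Q.V) : Q.C := ∑ i, Q.F (Q.e' i) (Q.e i) x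

/-- The covariant derivative `(∇ₓθ)y`. -/
def nablaTheta (x y : Q.V) : Q.C := Q.D x (Q.theta y) - Q.theta (Q.nabla x y)

/-- `θ` is closed iff `(∇ₓθ)y = (∇_yθ)x`. -/
def closed : Prop := ∀ x y, Q.nablaTheta x y = Q.nablaTheta y x

/-- The covariant derivative `(∇ₓF)(y,z,w)`. -/
def nablaF (x y z w : Q.V) : Q.C :=
  Q.D x (Q.F y z w) - Q.F (Q.nabla x y) z w - Q.F y (Q.nabla x z) w
    - Q.F y z (Q.nabla x w)

def psi1 (S : Q.V → Q.V → Q.C) (x y z w : Q.V) : Q.C :=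
  Q.g y z * S x w - Q.g x z * S y w + S y z * Q.g x w - S x z * Q.g y w

def psi2 (S : Q.V → Q.V → Q.C) (x y z w : Q.V) : Q.C :=
  Q.psi1 S x y (Q.P z) (Q.P w)

/-- The associated metric `g̃(x,y) = g(x,Py)`. -/
def gP (x y : Q.V) : Q.C := Q.g x (Q.P y)

noncomputable def pi1 (x y z w : Q.V) : Q.C :=
  ((1 : ℝ)/2) • Q.psi1 (fun a b => Q.g a b) x y z w

noncomputable def pi2 (x y z w : Q.V) : Q.C :=
  ((1 : ℝ)/2) • Q.psi2 (fun a b => Q.g a b) x y z w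

def pi3 (x y z w : Q.V) : Q.C := Q.psi1 Q.gP x y z w

/-- The Ricci tensor `ρ(L)(y,z) = g^{ij} L(e_i,y,z,e_j)` of a (0,4)-tensor. -/
def ric (L : Q.V → Q.V → Q.V → Q.V → Q.C) (y z : Q.V) : Q.C :=
  ∑ i, L (Q.e' i) y z (Q.e i)

/-- The scalar curvature `τ(L) = g^{ij} ρ(L)(e_i,e_j)`. -/
def scal (L : Q.V → Q.V → Q.V → Q.V → Q.C) : Q.C := ∑ i, Q.ric L (Q.e i) (Q.e' i)

/-- The associated Ricci tensor `ρ*(L)(y,z) = g^{ij} L(e_i,y,z,Pe_j)`. -/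
def ricStar (L : Q.V → Q.V → Q.V → Q.V → Q.C) (y z : Q.V) : Q.C :=
  ∑ i, L (Q.e' i) y z (Q.P (Q.e i))

/-- The associated scalar curvature `τ*(L)`. -/
def scalStar (L : Q.V → Q.V → Q.V → Q.V → Q.C) : Q.C :=
  ∑ i, Q.ricStar L (Q.e i) (Q.e' i)

/-- The trace `g^{ij} S(e_i,e_j)` of a (0,2)-tensor. -/
def trB (S : Q.V → Q.V → Q.C) : Q.C := ∑ i, S (Q.e i) (Q.e' i)

/-- The divergence of a vector field. -/
def divg (v : Q.V) : Q.C := ∑ i, Q.g (Q.e' i) (Q.nabla (Q.e i) v)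

/-- A curvature-like tensor. -/
def curvatureLike (L : Q.V → Q.V → Q.V → Q.V → Q.C) : Prop :=
  (∀ x y z w, L x y z w = - L y x z w) ∧
  (∀ x y z w, L x y z w = - L x y w z) ∧
  (∀ x y z w, L x y z w + L y z x w + L z x y w = 0)

/-- A Riemannian P-tensor. -/
def isPtensor (L : Q.V → Q.V → Q.V → Q.V → Q.C) : Prop :=
  Q.curvatureLike L ∧ ∀ x y z w, L x y (Q.P z) (Q.P w) = L x y z w

/-- The defining condition of the Naveira class `W̄₃` (dimension `n`, so the
factor `1/(2n)` of the paper is `1/n` here). -/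
def W3 : Prop :=
  (∀ x y z, Q.F x y z =
    ((1 : ℝ)/(n : ℝ)) • ((Q.g x y + Q.g x (Q.P y)) * Q.theta z +
      (Q.g x z + Q.g x (Q.P z)) * Q.theta y)) ∧
  (∀ x, Q.theta (Q.P x) = - Q.theta x)

/-- The defining condition of the Naveira class `W̄₆`. -/
def W6 : Prop :=
  (∀ x y z, Q.F x y z =
    ((1 : ℝ)/(n : ℝ)) • ((Q.g x y - Q.g x (Q.P y)) * Q.theta z +
      (Q.g x z - Q.g x (Q.P z)) * Q.theta y)) ∧
  (∀ x, Q.theta (Q.P x) = Q.theta x)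

end RAPM

namespace RAPM

section AuxProof

variable {m : ℕ} (Q : RAPM m)

/-- Nondegeneracy of `g` from the frame. -/
lemma gNondeg {a b : Q.V} (h : ∀ i, Q.g (Q.e' i) a = Q.g (Q.e' i) b) : a = b := by
  calc a = ∑ i, Q.g (Q.e' i) a • Q.e i := Q.frame_span a
    _ = ∑ i, Q.g (Q.e' i) b • Q.e i := by simp only [h]
    _ = b := (Q.frame_span b).symm

lemma gswapP (a b : Q.V) : Q.g (Q.P a) b = Q.g a (Q.P b) := by
  calc Q.g (Q.P a) b = Q.g (Q.P a) (Q.P (Q.P b)) := by rw [Q.Pinvol]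
    _ = Q.g a (Q.P b) := Q.Piso a (Q.P b)

/-- Leibniz rule for `D` on products of functions. -/
lemma Dmul (hm : 0 < m) (x : Q.V) (f h : Q.C) :
    Q.D x (f * h) = Q.D x f * h + f * Q.D x h := by
  set i : Fin m := ⟨0, hm⟩
  set a := h • Q.e' i with ha
  set b := Q.e i with hb
  have hab : Q.g a b = h := by
    rw [ha, hb, map_smul, LinearMap.smul_apply, smul_eq_mul, Q.dual_frame]
    simp
  have h1 : f * h = Q.g (f • a) b := by
    rw [map_smul, LinearMap.smul_apply, smul_eq_mul, hab]
  have h2 : Q.D x h = Q.g (Q.nabla x a) b + Q.g a (Q.nabla x b) := by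
    rw [← Q.nabla_metric, hab]
  rw [h1, Q.nabla_metric, Q.nabla_leibniz, h2]
  simp only [map_add, map_smul, LinearMap.add_apply, LinearMap.smul_apply,
    smul_eq_mul, Q.dual_frame]
  rw [hab]; ring

lemma Dzero (x : Q.V) : Q.D x 0 = 0 := by
  have h := Q.Dadd x 0 0
  rw [add_zero] at h
  exact left_eq_add.mp h

lemma Done (hm : 0 < m) (x : Q.V) : Q.D x 1 = 0 := by
  have h := Q.Dmul hm x 1 1
  rw [mul_one, one_mul, mul_one] at h
  have := left_eq_add.mp h
  rwa [this] at h

lemma Dneg (x : Q.V) (f : Q.C) : Q.D x (-f) = - Q.D x f := by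
  have h := Q.Dadd x f (-f)
  rw [add_neg_cancel, Q.Dzero] at h
  exact (neg_eq_of_add_eq_zero_right h.symm).symm

lemma Dsub (x : Q.V) (f h : Q.C) : Q.D x (f - h) = Q.D x f - Q.D x h := by
  rw [sub_eq_add_neg, Q.Dadd, Q.Dneg, sub_eq_add_neg]

lemma DnatCast (hm : 0 < m) (x : Q.V) (k : ℕ) : Q.D x (k : Q.C) = 0 := by
  induction k with
  | zero => simpa using Q.Dzero x
  | succ k ih =>
      push_cast
      rw [Q.Dadd, ih, Q.Done hm, add_zero]

lemma Dinv (hm : 0 < m) (x : Q.V) (k : ℕ) (hk : k ≠ 0) :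
    Q.D x (algebraMap ℝ Q.C (1 / (k : ℝ))) = 0 := by
  set r := algebraMap ℝ Q.C (1 / (k : ℝ)) with hr
  have hk' : (k : ℝ) ≠ 0 := Nat.cast_ne_zero.mpr hk
  have h1 : (k : Q.C) * r = 1 := by
    rw [hr, show (k : Q.C) = algebraMap ℝ Q.C (k : ℝ) by simp, ← map_mul]
    rw [mul_one_div_cancel hk', map_one]
  have h2 : (k : Q.C) * Q.D x r = 0 := by
    have := Q.Dmul hm x (k : Q.C) r
    rw [h1, Q.Done hm, Q.DnatCast hm, zero_mul, zero_add] at this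
    exact this.symm
  have h3 : (k : ℝ) • Q.D x r = 0 := by
    rw [Algebra.smul_def, map_natCast]; exact h2
  have h4 := congrArg (fun t => (k : ℝ)⁻¹ • t) h3
  simpa [smul_smul, inv_mul_cancel₀ hk'] using h4

lemma nabla_sub₁ (a b c : Q.V) :
    Q.nabla (a - b) c = Q.nabla a c - Q.nabla b c := by
  have hneg : Q.nabla (-b) c = - Q.nabla b c := by
    rw [show -b = (-1 : Q.C) • b by rw [neg_one_smul], Q.nabla_smul₁, neg_one_smul]
  rw [sub_eq_add_neg, Q.nabla_add₁, hneg, sub_eq_add_neg]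

lemma nabla_sub₂ (hm : 0 < m) (a b c : Q.V) :
    Q.nabla a (b - c) = Q.nabla a b - Q.nabla a c := by
  have hD : Q.D a (-1 : Q.C) = 0 := by rw [Q.Dneg, Q.Done hm, neg_zero]
  have hneg : Q.nabla a (-c) = - Q.nabla a c := by
    rw [show -c = (-1 : Q.C) • c by rw [neg_one_smul], Q.nabla_leibniz, hD,
      zero_smul, zero_add, neg_one_smul]
  rw [sub_eq_add_neg, Q.nabla_add₂, hneg, sub_eq_add_neg]

/-- `(∇ₓP)y`. -/
def Top (x y : Q.V) : Q.V := Q.nabla x (Q.P y) - Q.P (Q.nabla x y)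

lemma F_eq (x y z : Q.V) : Q.F x y z = Q.g (Q.Top x y) z := rfl

/-- `(∇ₓ(∇P))(y,z)` -/
def Sop (x y z : Q.V) : Q.V :=
  Q.nabla x (Q.Top y z) - Q.Top (Q.nabla x y) z - Q.Top y (Q.nabla x z)

lemma nablaF_eq (x y z w : Q.V) :
    Q.nablaF x y z w = Q.g (Q.Sop x y z) w := by
  unfold nablaF Sop
  rw [F_eq, F_eq, F_eq, F_eq, Q.nabla_metric x (Q.Top y z) w]
  simp only [map_sub, LinearMap.sub_apply]
  ring

lemma Sdiff (hm : 0 < m) (x y z : Q.V) :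
    Q.Sop x y z - Q.Sop y x z = Q.R x y (Q.P z) - Q.P (Q.R x y z) := by
  unfold Sop Top R
  rw [← Q.torsion_free x y]
  simp only [Q.nabla_sub₁, Q.nabla_sub₂ hm, map_sub]
  abel

lemma ricci (hm : 0 < m) (x y z w : Q.V) :
    Q.nablaF x y z w - Q.nablaF y x z w
      = Q.Rm x y (Q.P z) w - Q.Rm x y z (Q.P w) := by
  rw [Q.nablaF_eq, Q.nablaF_eq]
  have h1 : Q.g (Q.Sop x y z) w - Q.g (Q.Sop y x z) w
      = Q.g (Q.Sop x y z - Q.Sop y x z) w := by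
    rw [map_sub, LinearMap.sub_apply]
  rw [h1, Q.Sdiff hm, map_sub, LinearMap.sub_apply]
  unfold Rm
  rw [Q.gswapP (Q.R x y z) w]

end AuxProof

end RAPM

open RAPM in
/-- On a `W̄₆`-manifold of dimension `2n`:
`R(x,y,Pz,Pw) - R(x,y,z,w)
  = (1/2n){(ψ₁-ψ₂)(A') - (θ(Ω)/2n)(π₁-π₂)}`,
where `A'(y,z) = (∇_yθ)z + (1/2n)θ(y)θ(z)`. -/
theorem statement18 {n : ℕ} (hn : 0 < n) (Q : RAPM (2*n)) (htr : Q.trP = 0)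
    (hW : Q.W6) (Ω : Q.V) (hΩ : ∀ x, Q.g Ω x = Q.theta x)
    (A' : Q.V → Q.V → Q.C)
    (hA' : ∀ y z, A' y z =
      Q.nablaTheta y z + ((1 : ℝ)/(2*(n : ℝ))) • (Q.theta y * Q.theta z)) :
    ∀ x y z w, Q.Rm x y (Q.P z) (Q.P w) - Q.Rm x y z w =
      ((1 : ℝ)/(2*(n : ℝ))) •
        (Q.psi1 A' x y z w - Q.psi2 A' x y z w -
          ((1 : ℝ)/(2*(n : ℝ))) •
            (Q.theta Ω * (Q.pi1 x y z w - Q.pi2 x y z w))) := by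
  have hm : 0 < 2*n := by omega
  have hk : (2*n : ℕ) ≠ 0 := by omega
  set r : Q.C := algebraMap ℝ Q.C ((1:ℝ)/((2*n : ℕ) : ℝ)) with hr
  have hcast : ((2*n : ℕ) : ℝ) = 2*(n:ℝ) := by push_cast; ring
  have hsmul : ∀ f : Q.C, ((1 : ℝ)/(2*(n : ℝ))) • f = r * f := by
    intro f; rw [Algebra.smul_def, hr, hcast]
  have hDr : ∀ x, Q.D x r = 0 := fun x => Q.Dinv hm x (2*n) hk
  have hDrmul : ∀ x f, Q.D x (r * f) = r * Q.D x f := by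
    intro x f; rw [Q.Dmul hm, hDr, zero_mul, zero_add]
  have hΩ' : ∀ a, Q.g a Ω = Q.theta a := fun a => (Q.gSymm a Ω).trans (hΩ a)
  have hPΩ : Q.P Ω = Ω := by
    apply Q.gNondeg; intro i
    calc Q.g (Q.e' i) (Q.P Ω) = Q.g (Q.P (Q.e' i)) Ω := (Q.gswapP _ _).symm
      _ = Q.theta (Q.P (Q.e' i)) := hΩ' _
      _ = Q.theta (Q.e' i) := hW.2 _
      _ = Q.g (Q.e' i) Ω := (hΩ' _).symm
  have hFval : ∀ a b c, Q.F a b c =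
      r * ((Q.g a b - Q.g a (Q.P b)) * Q.theta c
        + (Q.g a c - Q.g a (Q.P c)) * Q.theta b) := by
    intro a b c
    rw [hW.1 a b c, Algebra.smul_def, hr]
  have hnablaTheta : ∀ a b, Q.nablaTheta a b = Q.g (Q.nabla a Ω) b := by
    intro a b
    unfold RAPM.nablaTheta
    rw [← hΩ b, ← hΩ (Q.nabla a b), Q.nabla_metric]
    ring
  have hT : ∀ a b, Q.Top a b =
      (r * (Q.g a b - Q.g a (Q.P b))) • Ω + (r * Q.theta b) • a
        - (r * Q.theta b) • (Q.P a) := by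
    intro a b
    apply Q.gNondeg; intro i
    have h1 : Q.g (Q.e' i) (Q.Top a b) = Q.F a b (Q.e' i) := by
      rw [Q.gSymm, ← Q.F_eq]
    have h2 : Q.g (Q.e' i) (Q.P a) = Q.g a (Q.P (Q.e' i)) := by
      rw [Q.gSymm, Q.gswapP]
    have h3 : Q.g (Q.e' i) a = Q.g a (Q.e' i) := Q.gSymm _ _
    rw [h1, hFval]
    simp only [map_add, map_sub, map_smul, smul_eq_mul]
    rw [hΩ' (Q.e' i), h2, h3]
    ring
  have hDθ : ∀ x c, Q.D x (Q.theta c)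
      = Q.g (Q.nabla x Ω) c + Q.theta (Q.nabla x c) := by
    intro x c
    rw [← hΩ c, Q.nabla_metric, hΩ]
  have hS : ∀ x y z, Q.Sop x y z =
      (-(r * Q.g y (Q.Top x z))) • Ω
      + (r * (Q.g y z - Q.g y (Q.P z))) • Q.nabla x Ω
      + (r * Q.g (Q.nabla x Ω) z) • (y - Q.P y)
      - (r * Q.theta z) • (Q.Top x y) := by
    intro x y z
    unfold RAPM.Sop
    rw [hT y z, hT (Q.nabla x y) z, hT y (Q.nabla x z)]
    simp only [Q.nabla_sub₂ hm, Q.nabla_add₂, Q.nabla_leibniz, hDrmul,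
      Q.Dsub, Q.nabla_metric x y z, Q.nabla_metric x y (Q.P z), hDθ]
    unfold RAPM.Top
    simp only [map_sub, map_add, map_smul, smul_eq_mul]
    module
  have hEval : ∀ x y z w, Q.nablaF x y z w =
      -(r * Q.g y (Q.Top x z)) * Q.theta w
      + r * (Q.g y z - Q.g y (Q.P z)) * Q.g (Q.nabla x Ω) w
      + r * Q.g (Q.nabla x Ω) z * (Q.g y w - Q.g y (Q.P w))
      - r * Q.theta z * Q.g (Q.Top x y) w := by
    intro x y z w
    rw [Q.nablaF_eq, hS]
    simp only [map_add, map_sub, map_smul, map_neg, LinearMap.add_apply,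
      LinearMap.sub_apply, LinearMap.smul_apply, LinearMap.neg_apply,
      smul_eq_mul]
    rw [hΩ w, Q.gswapP y w]
  have hNP : ∀ a b, Q.g (Q.nabla a Ω) (Q.P b) = Q.g (Q.nabla a Ω) b
      - r * (Q.g a b - Q.g a (Q.P b)) * Q.theta Ω := by
    intro a b
    have h1 : Q.P (Q.nabla a Ω) = Q.nabla a Ω - Q.Top a Ω := by
      unfold RAPM.Top; rw [hPΩ]; abel
    rw [← Q.gswapP, h1, map_sub, LinearMap.sub_apply, ← Q.F_eq, hFval, hPΩ]
    ring
  have hpi1 : ∀ x y z w, Q.pi1 x y z w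
      = Q.g y z * Q.g x w - Q.g x z * Q.g y w := by
    intro x y z w
    unfold RAPM.pi1 RAPM.psi1
    rw [show Q.g y z * Q.g x w - Q.g x z * Q.g y w + Q.g y z * Q.g x w
        - Q.g x z * Q.g y w
        = (Q.g y z * Q.g x w - Q.g x z * Q.g y w)
          + (Q.g y z * Q.g x w - Q.g x z * Q.g y w) by ring]
    rw [show ∀ f : Q.C, ((1:ℝ)/2) • (f + f) = f by
      intro f
      rw [show f + f = (2:ℝ) • f by rw [two_smul], smul_smul]
      norm_num]
  have hpi2 : ∀ x y z w, Q.pi2 x y z w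
      = Q.g y (Q.P z) * Q.g x (Q.P w) - Q.g x (Q.P z) * Q.g y (Q.P w) := by
    intro x y z w
    unfold RAPM.pi2 RAPM.psi2 RAPM.psi1
    rw [show Q.g y (Q.P z) * Q.g x (Q.P w) - Q.g x (Q.P z) * Q.g y (Q.P w)
        + Q.g y (Q.P z) * Q.g x (Q.P w) - Q.g x (Q.P z) * Q.g y (Q.P w)
        = (Q.g y (Q.P z) * Q.g x (Q.P w) - Q.g x (Q.P z) * Q.g y (Q.P w))
          + (Q.g y (Q.P z) * Q.g x (Q.P w) - Q.g x (Q.P z) * Q.g y (Q.P w)) by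
      ring]
    rw [show ∀ f : Q.C, ((1:ℝ)/2) • (f + f) = f by
      intro f
      rw [show f + f = (2:ℝ) • f by rw [two_smul], smul_smul]
      norm_num]
  intro x y z w
  have hxy : Q.g y x = Q.g x y := Q.gSymm _ _
  have hPxy : Q.g y (Q.P x) = Q.g x (Q.P y) := by
    rw [Q.gSymm, Q.gswapP]
  have hPPw : Q.g y (Q.P (Q.P w)) = Q.g y w := by rw [Q.Pinvol]
  have hPPw' : Q.g x (Q.P (Q.P w)) = Q.g x w := by rw [Q.Pinvol]
  have hLHS : Q.Rm x y (Q.P z) (Q.P w) - Q.Rm x y z w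
      = Q.nablaF x y z (Q.P w) - Q.nablaF y x z (Q.P w) := by
    rw [Q.ricci hm x y z (Q.P w), Q.Pinvol]
  rw [hLHS, hEval, hEval]
  -- expand the g(·, Top) terms via F
  have hgT : ∀ a b c, Q.g c (Q.Top a b) = Q.F a b c := by
    intro a b c; rw [Q.gSymm, Q.F_eq]
  have hgT' : ∀ a b c, Q.g (Q.Top a b) c = Q.F a b c := fun a b c => (Q.F_eq a b c).symm
  rw [hgT, hgT, hgT', hgT', hFval, hFval, hFval, hFval]
  -- RHS
  rw [hsmul, hsmul]
  unfold RAPM.psi1 RAPM.psi2 RAPM.psi1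
  rw [hpi1, hpi2]
  simp only [hA', hnablaTheta, hsmul]
  rw [hW.2 z, hW.2 w, hPPw, hPPw', hxy, hPxy]
  simp only [hNP, hW.2]
  ring
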